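/- In the blowup model, suppose Λ is A*-dense for some constant A* > 0. Then there is a constant C > 0, depending only on A* and α_min, such that for all reals S > 0 and x > S, the section s_x blows up in time t_max(x) ≤ C/S; explicitly, one may take C = 2A*·(1 + α_min)/(α_min − 1). (This is the abstract content of the paper's Lemma: sections with large initial value blow up quickly, the A*-density hypothesis being what the paper deduces from ergodicity of the translation flow on the invariant flat surface.) -/

import Mathlib

/-!
Follow the potential `Φ = τ + 2A(1 + αmin)/((αmin - 1) s)` along the events of `s_x`, where
`τ` is the current event time and `s` the current value. Density puts a singularity `q`
in the box `(τ, τ + 2A/s] × (0, s/2]`. The section cannot pass time `q.1` without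
hitting `q`, and after that hit its value is at least `(1 + αmin)/2 · s`. The constant
is chosen so that this lowers the second term of `Φ` by exactly `2A/s`, and `2A/s` is
the most time that can pass before the hit. So `Φ` never increases from one hit to the
next, and every event time is at most `Φ` at time `0`, which is `2A(1 + αmin)/((αmin - 1) x)`.
-/

open scoped Classical

open Set in
/-- The blowup model: magnification bounds `1 < αmin ≤ αmax`, a set `Λ ⊆ (0,∞) × (0,∞)`
of singularities with distinct first coordinates which is finite in every box
`(0,T] × (0,H]`, and a magnification function `mag` taking values in `[αmin, αmax]`
on `Λ`. -/
structure BlowupModel where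
  αmin : ℝ
  αmax : ℝ
  one_lt_αmin : 1 < αmin
  αmin_le_αmax : αmin ≤ αmax
  Λ : Set (ℝ × ℝ)
  Λ_pos : ∀ p ∈ Λ, 0 < p.1 ∧ 0 < p.2
  Λ_inj : ∀ p ∈ Λ, ∀ q ∈ Λ, p.1 = q.1 → p = q
  Λ_locFin : ∀ T H : ℝ, (Λ ∩ Set.Ioc 0 T ×ˢ Set.Ioc 0 H).Finite
  mag : ℝ × ℝ → ℝ
  mag_mem : ∀ p ∈ Λ, αmin ≤ mag p ∧ mag p ≤ αmax

namespace BlowupModel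

/-- The singularities that a section of current value `s` can hit after time `τ`. -/
def eventSet (M : BlowupModel) (τ s : ℝ) : Set (ℝ × ℝ) :=
  {p | p ∈ M.Λ ∧ τ < p.1 ∧ p.2 < s}

/-- The singularity realizing the next event after time `τ` for a section of current
value `s` (the one with least time coordinate; junk value if there is none). -/
noncomputable def nextSing (M : BlowupModel) (τ s : ℝ) : ℝ × ℝ :=
  Classical.epsilon fun p => p ∈ M.eventSet τ s ∧ ∀ q ∈ M.eventSet τ s, p.1 ≤ q.1

/-- `evt M x n` is the pair (time of the `n`-th event, value of the section `s_x` just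
after the `n`-th event), starting from `evt M x 0 = (0, x)`; at an event at the
singularity `(t,b)` the value jumps from `s` to `b + mag (t,b) * (s - b)`.  If no
further event occurs, the pair is repeated forever. -/
noncomputable def evt (M : BlowupModel) (x : ℝ) : ℕ → ℝ × ℝ
  | 0 => (0, x)
  | n + 1 =>
    let τ := (evt M x n).1
    let s := (evt M x n).2
    if (M.eventSet τ s).Nonempty then
      ((M.nextSing τ s).1,
        (M.nextSing τ s).2 + M.mag (M.nextSing τ s) * (s - (M.nextSing τ s).2))
    else (τ, s)

/-- The blowup time of the section `s_x`: the supremum of the event times if there are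
infinitely many events, and `∞` otherwise. -/
noncomputable def tmax (M : BlowupModel) (x : ℝ) : EReal :=
  if ∀ n, (M.eventSet (M.evt x n).1 (M.evt x n).2).Nonempty then
    ⨆ n, ((M.evt x n).1 : EReal)
  else ⊤

/-- The value of the section `s_x` at time `t` (meaningful for `0 ≤ t < tmax x`): the
value just after the last event at time `≤ t`. -/
noncomputable def sx (M : BlowupModel) (x t : ℝ) : ℝ :=
  sSup ((fun n => (M.evt x n).2) '' {n | (M.evt x n).1 ≤ t})

end BlowupModel

/-- `Λ` is `A`-dense: every box `(t, t+w] × (0, h]` with `t ≥ 0` and area `w·h ≥ A`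
contains a singularity. -/
def BlowupModel.ADense (M : BlowupModel) (A : ℝ) : Prop :=
  ∀ t : ℝ, 0 ≤ t → ∀ w h : ℝ, 0 < w → 0 < h → A ≤ w * h →
    ∃ p ∈ M.Λ, t < p.1 ∧ p.1 ≤ t + w ∧ p.2 ≤ h

namespace BlowupModel

variable (M : BlowupModel) (x : ℝ)

lemma nextSing_spec {τ s : ℝ} (hne : (M.eventSet τ s).Nonempty) :
    M.nextSing τ s ∈ M.eventSet τ s ∧ ∀ q ∈ M.eventSet τ s, (M.nextSing τ s).1 ≤ q.1 := by
  apply Classical.epsilon_spec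
    (p := fun p => p ∈ M.eventSet τ s ∧ ∀ q ∈ M.eventSet τ s, p.1 ≤ q.1)
  obtain ⟨p₀, hp₀⟩ := hne
  have hfin : (M.eventSet τ s ∩ {p | p.1 ≤ p₀.1}).Finite := by
    refine (M.Λ_locFin p₀.1 s).subset ?_
    rintro p ⟨⟨hΛ, -, hps⟩, hle⟩
    exact ⟨hΛ, ⟨(M.Λ_pos p hΛ).1, hle⟩, ⟨(M.Λ_pos p hΛ).2, hps.le⟩⟩
  obtain ⟨p, ⟨hp, hpp₀⟩, hmin⟩ :=
    hfin.exists_minimalFor Prod.fst _ ⟨p₀, hp₀, show p₀.1 ≤ p₀.1 from le_rfl⟩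
  refine ⟨p, hp, fun q hq => ?_⟩
  by_cases hqp₀ : q.1 ≤ p₀.1
  · by_contra! hqp
    exact hqp.not_ge (hmin ⟨hq, hqp₀⟩ hqp.le)
  · exact hpp₀.trans (le_of_not_ge hqp₀)

lemma evt_succ_of_nonempty {n : ℕ} (hne : (M.eventSet (M.evt x n).1 (M.evt x n).2).Nonempty) :
    M.evt x (n + 1) =
      let p := M.nextSing (M.evt x n).1 (M.evt x n).2
      (p.1, p.2 + M.mag p * ((M.evt x n).2 - p.2)) := by
  rw [evt, if_pos hne]

lemma evt_succ_of_not_nonempty {n : ℕ}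
    (hne : ¬(M.eventSet (M.evt x n).1 (M.evt x n).2).Nonempty) :
    M.evt x (n + 1) = M.evt x n := by
  rw [evt, if_neg hne]

lemma monotone_evt_fst : Monotone fun n => (M.evt x n).1 := by
  refine monotone_nat_of_le_succ fun n => ?_
  by_cases hne : (M.eventSet (M.evt x n).1 (M.evt x n).2).Nonempty
  · rw [M.evt_succ_of_nonempty x hne]
    exact (M.nextSing_spec hne).1.2.1.le
  · rw [M.evt_succ_of_not_nonempty x hne]

lemma monotone_evt_snd : Monotone fun n => (M.evt x n).2 := by
  refine monotone_nat_of_le_succ fun n => ?_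
  by_cases hne : (M.eventSet (M.evt x n).1 (M.evt x n).2).Nonempty
  · rw [M.evt_succ_of_nonempty x hne]
    obtain ⟨hΛ, -, hps⟩ := (M.nextSing_spec hne).1
    have hmag : 1 ≤ M.mag (M.nextSing _ _) := M.one_lt_αmin.le.trans (M.mag_mem _ hΛ).1
    dsimp only
    nlinarith
  · rw [M.evt_succ_of_not_nonempty x hne]

lemma evt_fst_nonneg (n : ℕ) : 0 ≤ (M.evt x n).1 :=
  M.monotone_evt_fst x n.zero_le

lemma le_evt_snd (n : ℕ) : x ≤ (M.evt x n).2 :=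
  M.monotone_evt_snd x n.zero_le

lemma exists_evt_succ_eq_of_mem_eventSet {n k : ℕ} {q : ℝ × ℝ}
    (hq : q ∈ M.eventSet (M.evt x n).1 (M.evt x n).2) (hqk : q.1 ≤ (M.evt x k).1) :
    ∃ m, n ≤ m ∧ m < k ∧ M.evt x (m + 1) = (q.1, q.2 + M.mag q * ((M.evt x m).2 - q.2)) := by
  have hpassed : ∃ j, q.1 ≤ (M.evt x j).1 := ⟨k, hqk⟩
  have hnj : n < Nat.find hpassed := by
    by_contra! hjn
    exact hq.2.1.not_ge ((Nat.find_spec hpassed).trans (M.monotone_evt_fst x hjn))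
  obtain ⟨m, hm⟩ : ∃ m, Nat.find hpassed = m + 1 := Nat.exists_eq_add_one_of_ne_zero (by omega)
  have hτm : (M.evt x m).1 < q.1 := lt_of_not_ge (Nat.find_min hpassed (by omega))
  have hqm : q ∈ M.eventSet (M.evt x m).1 (M.evt x m).2 :=
    ⟨hq.1, hτm, hq.2.2.trans_le (M.monotone_evt_snd x (by omega : n ≤ m))⟩
  have hne : (M.eventSet (M.evt x m).1 (M.evt x m).2).Nonempty := ⟨q, hqm⟩
  obtain ⟨hp, hpmin⟩ := M.nextSing_spec hne
  have hnext : M.nextSing (M.evt x m).1 (M.evt x m).2 = q := by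
    refine M.Λ_inj _ hp.1 q hq.1 (le_antisymm (hpmin q hqm) ?_)
    have hτsucc := Nat.find_spec hpassed
    rwa [hm, M.evt_succ_of_nonempty x hne] at hτsucc
  refine ⟨m, by omega, by have := Nat.find_min' hpassed hqk; omega, ?_⟩
  rw [M.evt_succ_of_nonempty x hne, hnext]

variable {M} in
lemma ADense.exists_mem_Λ {A : ℝ} (hdense : M.ADense A) (hA : 0 < A) {τ s : ℝ} (hτ : 0 ≤ τ)
    (hs : 0 < s) : ∃ q ∈ M.Λ, τ < q.1 ∧ q.1 ≤ τ + 2 * A / s ∧ q.2 ≤ s / 2 :=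
  hdense τ hτ (2 * A / s) (s / 2) (by positivity) (by positivity) (by field_simp; rfl)

lemma half_add_mul_le_add_mul_sub {α a b s s' : ℝ} (hα : 1 ≤ α) (ha : α ≤ a) (hb : 0 ≤ b)
    (hbs : b ≤ s / 2) (hss' : s ≤ s') : (1 + α) / 2 * s ≤ b + a * (s' - b) := by
  nlinarith [mul_le_mul_of_nonneg_right ha (by linarith : 0 ≤ s' - b),
    mul_le_mul_of_nonneg_left hss' (by linarith : 0 ≤ α)]

noncomputable def blowupConst (A : ℝ) : ℝ := 2 * A * (1 + M.αmin) / (M.αmin - 1)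

lemma blowupConst_pos {A : ℝ} (hA : 0 < A) : 0 < M.blowupConst A := by
  have := M.one_lt_αmin
  apply div_pos <;> nlinarith

lemma div_add_blowupConst_div_mul {A s : ℝ} (hs : s ≠ 0) :
    2 * A / s + M.blowupConst A / ((1 + M.αmin) / 2 * s) = M.blowupConst A / s := by
  have := M.one_lt_αmin
  have h1 : M.αmin - 1 ≠ 0 := by linarith
  have h2 : 1 + M.αmin ≠ 0 := by linarith
  unfold blowupConst
  field_simp
  ring

lemma evt_fst_le_of_ADense {A T : ℝ} (hA : 0 < A) (hdense : M.ADense A) (hx : 0 < x)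
    {n k : ℕ} (hnk : n ≤ k) (hT : (M.evt x n).1 + M.blowupConst A / (M.evt x n).2 ≤ T) :
    (M.evt x k).1 ≤ T := by
  induction hd : k - n using Nat.strong_induction_on generalizing n with
  | _ d ih =>
    have hs : 0 < (M.evt x n).2 := hx.trans_le (M.le_evt_snd x n)
    obtain ⟨q, hqΛ, hτq, hqτ, hqs⟩ := hdense.exists_mem_Λ hA (M.evt_fst_nonneg x n) hs
    have hbalance := M.div_add_blowupConst_div_mul (A := A) hs.ne'
    have hCpos := M.blowupConst_pos hA
    have hcs : 0 < (1 + M.αmin) / 2 * (M.evt x n).2 := by have := M.one_lt_αmin; positivity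
    -- either step `k` comes before time `q.1`, or `s_x` hits `q` on the way
    rcases lt_or_ge (M.evt x k).1 q.1 with hkq | hqk
    · have : 0 < M.blowupConst A / ((1 + M.αmin) / 2 * (M.evt x n).2) := by positivity
      linarith
    obtain ⟨m, hnm, hmk, hm⟩ :=
      M.exists_evt_succ_eq_of_mem_eventSet x ⟨hqΛ, hτq, by linarith⟩ hqk
    have hgrow : (1 + M.αmin) / 2 * (M.evt x n).2 ≤ (M.evt x (m + 1)).2 := by
      rw [hm]
      exact half_add_mul_le_add_mul_sub M.one_lt_αmin.le (M.mag_mem q hqΛ).1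
        (M.Λ_pos q hqΛ).2.le hqs (M.monotone_evt_snd x hnm)
    refine ih (k - (m + 1)) (by omega) (by omega) ?_ rfl
    calc (M.evt x (m + 1)).1 + M.blowupConst A / (M.evt x (m + 1)).2
        ≤ ((M.evt x n).1 + 2 * A / (M.evt x n).2)
            + M.blowupConst A / ((1 + M.αmin) / 2 * (M.evt x n).2) := by
          rw [hm] at hgrow ⊢
          exact add_le_add hqτ (div_le_div_of_nonneg_left hCpos.le hcs hgrow)
      _ = (M.evt x n).1 + M.blowupConst A / (M.evt x n).2 := by rw [add_assoc, hbalance]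
      _ ≤ T := hT

lemma tmax_le_of_ADense {A : ℝ} (hA : 0 < A) (hdense : M.ADense A) (hx : 0 < x) :
    M.tmax x ≤ ((M.blowupConst A / x : ℝ) : EReal) := by
  have hne (n : ℕ) : (M.eventSet (M.evt x n).1 (M.evt x n).2).Nonempty := by
    obtain ⟨q, hqΛ, hτq, -, hqs⟩ :=
      hdense.exists_mem_Λ hA (M.evt_fst_nonneg x n) (hx.trans_le (M.le_evt_snd x n))
    exact ⟨q, hqΛ, hτq, by linarith [M.le_evt_snd x n]⟩
  rw [tmax, if_pos hne]
  exact iSup_le fun k => EReal.coe_le_coe_iff.2 <|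
    M.evt_fst_le_of_ADense x hA hdense hx k.zero_le (zero_add _).le

end BlowupModel

theorem statement5 (M : BlowupModel) (A : ℝ) (hA : 0 < A) (hdense : M.ADense A) :
    ∃ C : ℝ, 0 < C ∧ C = 2 * A * (1 + M.αmin) / (M.αmin - 1) ∧
      ∀ S x : ℝ, 0 < S → S < x → M.tmax x ≤ ((C / S : ℝ) : EReal) := by
  refine ⟨M.blowupConst A, M.blowupConst_pos hA, rfl, fun S x hS hSx => ?_⟩
  calc M.tmax x ≤ ((M.blowupConst A / x : ℝ) : EReal) :=
        M.tmax_le_of_ADense x hA hdense (hS.trans hSx)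
    _ ≤ ((M.blowupConst A / S : ℝ) : EReal) :=
        EReal.coe_le_coe_iff.2 (div_le_div_of_nonneg_left (M.blowupConst_pos hA).le hS hSx.le)
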